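/- Generalized type I, Red wins when Blue has no guards: on a board with no long b-piles (any ℓ ≥ 0), if Blue is the active player with m_b = 0, then Red wins by applying strategy S at every round. -/

import Mathlib

/-!  A model of the two-player, two-color endgame of *So Long Sucker*.

The two remaining players are Blue and Red, identified with their colors.
A pile is a finite sequence of chips (head = top chip).  A game state
records the board, the number of chips of each color held by each player,
and the active player. -/

/-- The two chip colors (also naming the two remaining players). -/
inductive Color : Type
  | b : Color
  | r : Color
deriving DecidableEq, Repr

/-- The opponent's color. -/
def Color.other : Color → Color
  | Color.b => Color.r
  | Color.r => Color.b

/-- A pile of chips; the head of the list is the top chip. -/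
abbrev Pile := List Color

/-- A game state: the board (a list of piles), the chip counts
`chips p c` = number of `c`-colored chips held by player `p`,
and the active player. -/
structure GState where
  board : List Pile
  chips : Color → Color → ℕ
  active : Color

/-- Total number of chips in player `p`'s possession. -/
def totalChips (s : GState) (p : Color) : ℕ :=
  s.chips p Color.b + s.chips p Color.r

/-- The Next Player Rule in the two-player, two-color endgame, as a function
of the pile played on (before the placement) and the color of the placed
chip: if the placement triggers a capture, the capturing player moves next;
otherwise the player of the other color than the placed chip moves next
(this is the unique player allowed by the Next Player Rule). -/
def nextActive (π : Pile) (c : Color) : Color :=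
  if π.head? = some c then c else c.other

/-- Placement of a chip of color `c` on pile number `i` by the active
player, with the Capture Rule and Next Player Rule applied. -/
inductive PlaceOn (i : ℕ) : GState → GState → Prop
  | noCapture (s : GState) (c : Color)
      (hi : i < s.board.length)
      (hc : 0 < s.chips s.active c)
      (hcap : (s.board.getD i []).head? ≠ some c) :
      PlaceOn i s
        { board := s.board.set i (c :: s.board.getD i []),
          chips := fun p x =>
            s.chips p x - (if p = s.active ∧ x = c then 1 else 0),
          active := c.other }
  | capture (s : GState) (c : Color) (d : Color)
      (hi : i < s.board.length)
      (hc : 0 < s.chips s.active c)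
      (hcap : (s.board.getD i []).head? = some c)
      (hd : d ∈ c :: s.board.getD i []) :
      PlaceOn i s
        { board := s.board.set i [],
          chips := fun p x =>
            (s.chips p x - (if p = s.active ∧ x = c then 1 else 0))
              + (if p = c then
                  (c :: s.board.getD i []).count x - (if d = x then 1 else 0)
                 else 0),
          active := c }

/-- One legal move of the active player: placing a chip on some pile
(resolving captures), discarding a prisoner, or donating a prisoner
to the opponent. -/
inductive Step : GState → GState → Prop
  | place (i : ℕ) (s s' : GState) (h : PlaceOn i s s') : Step s s'
  | discardPrisoner (s : GState)
      (hc : 0 < s.chips s.active s.active.other) :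
      Step s
        { board := s.board,
          chips := fun p x =>
            s.chips p x - (if p = s.active ∧ x = s.active.other then 1 else 0),
          active := s.active }
  | donatePrisoner (s : GState)
      (hc : 0 < s.chips s.active s.active.other) :
      Step s
        { board := s.board,
          chips := fun p x =>
            if x = s.active.other then
              (if p = s.active then s.chips p x - 1 else s.chips p x + 1)
            else s.chips p x,
          active := s.active }

/-- Player `p` has a winning strategy from state `s`: either the opponent is
to move with no chips (and `p` refuses to donate), so the opponent is
eliminated and `p` wins; or it is `p`'s turn and some move of `p` leads to a
winning position; or it is the opponent's turn and every move of the opponent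
leads to a position winning for `p`. -/
inductive WinsFor (p : Color) : GState → Prop
  | elim (s : GState) (h : s.active ≠ p) (h0 : totalChips s s.active = 0) :
      WinsFor p s
  | mine (s s' : GState) (h : s.active = p) (hs : Step s s')
      (hw : WinsFor p s') : WinsFor p s
  | theirs (s : GState) (h : s.active ≠ p) (h0 : 0 < totalChips s s.active)
      (hw : ∀ s', Step s s' → WinsFor p s') : WinsFor p s

/-- The index of the pile on which strategy `S` places its guard:
the longest pile whose top chip has the opponent's color `q`,
or an empty pile if there is no `q`-pile. -/
def targetIdx (q : Color) (l : List Pile) : ℕ :=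
  let opp := l.filter (fun π => π.head? == some q)
  if opp.isEmpty then
    l.findIdx (fun π => π.isEmpty)
  else
    l.findIdx (fun π =>
      (π.head? == some q) &&
        (π.length == (opp.map List.length).foldr Nat.max 0))

/-- The state resulting from the active player `p` playing one full round of
strategy `S`: capture every `p`-pile (discarding an opponent chip from a
captured pile when it contains one, and a `p` chip otherwise), discard all
prisoners, and finally place one guard on the longest opponent-colored pile,
or on an empty pile if there is none.  The turn then passes to the
opponent. -/
def SRound (s : GState) : GState :=
  let p := s.active
  let q := p.other
  let capt := s.board.filter (fun π => π.head? == some p)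
  let b1 := s.board.map (fun π => if π.head? == some p then ([] : Pile) else π)
  let g1 := s.chips p p +
      (capt.map (fun π =>
        if π.contains q then π.count p else π.count p - 1)).sum
  let i := targetIdx q b1
  { board := b1.set i (p :: b1.getD i []),
    chips := fun pl x =>
      if pl = p then (if x = p then g1 - 1 else 0) else s.chips pl x,
    active := q }

/-- Player `p` wins by applying strategy `S` at each of `p`'s rounds,
whatever the opponent plays. -/
inductive WinsWithS (p : Color) : GState → Prop
  | elim (s : GState) (h : s.active ≠ p) (h0 : totalChips s s.active = 0) :
      WinsWithS p s
  | mine (s : GState) (h : s.active = p) (hg : 0 < s.chips p p)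
      (hw : WinsWithS p (SRound s)) : WinsWithS p s
  | theirs (s : GState) (h : s.active ≠ p) (h0 : 0 < totalChips s s.active)
      (hw : ∀ s', Step s s' → WinsWithS p s') : WinsWithS p s

/-- Every pile on the board is an alternating sequence of colors. -/
def Alternating (l : List Pile) : Prop := ∀ π ∈ l, π.Chain' (· ≠ ·)

/-- The long piles (length at least 2) whose top chip has color `c`. -/
def longPiles (c : Color) (l : List Pile) : List Pile :=
  l.filter (fun π => decide (2 ≤ π.length) && (π.head? == some c))

/-- The sum, over all long `c`-piles, of the number of `c` chips they
contain (e.g. `Σᵢ |ρᵢ|_r` for `c = r`). -/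
def longSum (c : Color) (l : List Pile) : ℕ :=
  ((longPiles c l).map (fun π => π.count c)).sum

/-- The maximum, over all long `c`-piles, of the number of `c` chips they
contain (`0` if there is no long `c`-pile). -/
def longMax (c : Color) (l : List Pile) : ℕ :=
  ((longPiles c l).map (fun π => π.count c)).foldr Nat.max 0

/-- The total number of chips in the game (in hands and on the board). -/
def chipCount (s : GState) : ℕ :=
  totalChips s Color.b + totalChips s Color.r + (s.board.map List.length).sum

/-! With no blue chip in hand, Blue can only place red chips or get rid of red prisoners.
Each such move strictly lowers `bluePotential`, the number of chips in play plus the chips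
in Blue's hand: a quiet placement moves a chip from Blue's hand to the board, a capture hands the
pile to Red minus one discarded chip, and a prisoner leaves Blue's hand.  A capture leaves Red
holding a red chip, so she can play a round of `S`, which never adds chips to the game and does
not touch Blue's hand.  Hence Blue is eventually to move empty-handed and is eliminated. -/

theorem Color.count_b_add_count_r (l : List Color) :
    l.count Color.b + l.count Color.r = l.length := by
  induction l with
  | nil => rfl
  | cons a t ih => cases a <;> simp <;> omega

theorem Color.other_ne (p : Color) : p.other ≠ p := by
  cases p <;> decide

theorem sum_length_set_add_length {α : Type*} (l : List (List α)) {i : ℕ} (hi : i < l.length)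
    (x : List α) :
    ((l.set i x).map List.length).sum + (l.getD i []).length
      = (l.map List.length).sum + x.length := by
  induction l generalizing i with
  | nil => simp at hi
  | cons a t ih =>
    cases i with
    | zero =>
      simp only [List.set_cons_zero, List.map_cons, List.sum_cons, List.getD_cons_zero]
      omega
    | succ j =>
      have := ih (Nat.lt_of_succ_lt_succ hi)
      simp only [List.set_cons_succ, List.getD_cons_succ, List.map_cons, List.sum_cons]
      omega

theorem sum_length_set_cons_le {α : Type*} (l : List (List α)) (i : ℕ) (a : α) :
    ((l.set i (a :: l.getD i [])).map List.length).sum ≤ (l.map List.length).sum + 1 := by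
  by_cases hi : i < l.length
  · have := sum_length_set_add_length l hi (a :: l.getD i [])
    simp only [List.length_cons] at this
    omega
  · rw [List.set_eq_of_length_le (by omega)]
    omega

theorem sum_length_map_clear_add_filter {α : Type*} (l : List (List α)) (p : List α → Bool) :
    ((l.map fun π => if p π then [] else π).map List.length).sum
      + ((l.filter p).map List.length).sum = (l.map List.length).sum := by
  induction l with
  | nil => rfl
  | cons a t ih =>
    cases h : p a <;>
      simp only [List.map_cons, List.filter_cons, h, List.sum_cons, Bool.false_eq_true,
        if_true, if_false, List.length_nil] <;> omega

theorem chipCount_eq (s : GState) (p : Color) :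
    chipCount s = totalChips s p + totalChips s p.other + (s.board.map List.length).sum := by
  cases p <;> simp only [chipCount, Color.other]; omega

theorem SRound_active (t : GState) : (SRound t).active = t.active.other := rfl

theorem SRound_chips_of_ne {t : GState} {p : Color} (hp : p ≠ t.active) (x : Color) :
    (SRound t).chips p x = t.chips p x := by
  simp [SRound, hp]

theorem totalChips_SRound_active (t : GState) :
    totalChips (SRound t) t.active = t.chips t.active t.active +
      ((t.board.filter fun π => π.head? == some t.active).map
        fun π => if π.contains t.active.other then π.count t.active
          else π.count t.active - 1).sum - 1 := by
  cases h : t.active <;> simp [totalChips, SRound, h, Color.other]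

theorem sum_length_board_SRound_le (t : GState) :
    ((SRound t).board.map List.length).sum
      + ((t.board.filter fun π => π.head? == some t.active).map List.length).sum
      ≤ (t.board.map List.length).sum + 1 := by
  have hguard : ((SRound t).board.map List.length).sum
      ≤ ((t.board.map fun π => if π.head? == some t.active then [] else π).map
          List.length).sum + 1 :=
    sum_length_set_cons_le _ _ _
  have hclear : ((t.board.map fun π => if π.head? == some t.active then [] else π).map
          List.length).sum
      + ((t.board.filter fun π => π.head? == some t.active).map List.length).sum
      = (t.board.map List.length).sum :=
    sum_length_map_clear_add_filter _ _
  omega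

theorem chipCount_SRound_le {t : GState} (hg : 0 < t.chips t.active t.active) :
    chipCount (SRound t) ≤ chipCount t := by
  have hother : totalChips (SRound t) t.active.other = totalChips t t.active.other := by
    simp only [totalChips, SRound_chips_of_ne (Color.other_ne t.active)]
  have hown : t.chips t.active t.active ≤ totalChips t t.active := by
    cases t.active <;> simp [totalChips]
  have hcapt : ((t.board.filter fun π => π.head? == some t.active).map
      fun π => if π.contains t.active.other then π.count t.active else π.count t.active - 1).sum
      ≤ ((t.board.filter fun π => π.head? == some t.active).map List.length).sum :=
    List.sum_le_sum fun π _ => by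
      have := π.count_le_length (a := t.active)
      split
      exacts [this, (Nat.sub_le _ _).trans this]
  have hboard := sum_length_board_SRound_le t
  rw [chipCount_eq (SRound t) t.active, chipCount_eq t t.active, totalChips_SRound_active, hother]
  omega

def bluePotential (s : GState) : ℕ := chipCount s + totalChips s Color.b

def BlueUnguardedToMove (s : GState) : Prop :=
  s.active = Color.b ∧ s.chips Color.b Color.b = 0

def RedGuardedToMove (s : GState) : Prop :=
  s.active = Color.r ∧ 0 < s.chips Color.r Color.r ∧ s.chips Color.b Color.b = 0

theorem BlueUnguardedToMove.eq_r_of_chips_pos {s : GState} (hs : BlueUnguardedToMove s)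
    {c : Color} (hc : 0 < s.chips s.active c) : c = Color.r := by
  obtain ⟨ha, hb⟩ := hs
  cases c
  · simp [ha, hb] at hc
  · rfl

theorem PlaceOn.blueUnguarded {i : ℕ} {s s' : GState} (h : PlaceOn i s s')
    (hs : BlueUnguardedToMove s) :
    bluePotential s' < bluePotential s ∧ (BlueUnguardedToMove s' ∨ RedGuardedToMove s') := by
  obtain ⟨ha, hb⟩ := hs
  cases h with
  | noCapture c hi hc _ =>
    obtain rfl := BlueUnguardedToMove.eq_r_of_chips_pos ⟨ha, hb⟩ hc
    have hsum := sum_length_set_add_length s.board hi (Color.r :: s.board.getD i [])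
    rw [ha] at hc
    refine ⟨?_, Or.inl ⟨rfl, by simp [ha, hb]⟩⟩
    simp [bluePotential, chipCount, totalChips, ha] at hsum ⊢
    omega
  | capture c d hi hc hcap hd =>
    obtain rfl := BlueUnguardedToMove.eq_r_of_chips_pos ⟨ha, hb⟩ hc
    rw [ha] at hc
    have hsum := sum_length_set_add_length s.board hi []
    -- Red captures a pile topped by a red chip plus the red chip just placed, so she keeps a
    -- red chip whichever chip she discards.
    refine ⟨?_, Or.inr ⟨rfl, ?_, by simp [ha, hb]⟩⟩
    all_goals
      simp only [bluePotential, chipCount, totalChips, ha] at hsum ⊢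
      generalize s.board.getD i [] = π at *
      have hcnt : 0 < π.count Color.r := List.count_pos_iff.mpr (List.mem_of_head? hcap)
      have hlen := Color.count_b_add_count_r π
      have hdm : 0 < (Color.r :: π).count d := List.count_pos_iff.mpr hd
      cases d <;> simp [-List.count_pos_iff] at hdm hsum ⊢ <;> omega

theorem Step.blueUnguarded {s s' : GState} (h : Step s s') (hs : BlueUnguardedToMove s) :
    bluePotential s' < bluePotential s ∧ (BlueUnguardedToMove s' ∨ RedGuardedToMove s') := by
  obtain ⟨ha, hb⟩ := hs
  cases h with
  | place i _ _ h => exact h.blueUnguarded ⟨ha, hb⟩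
  | discardPrisoner _ hc | donatePrisoner _ hc =>
    simp only [ha, Color.other] at hc
    refine ⟨?_, Or.inl ⟨ha, by simp [ha, hb]⟩⟩
    simp [bluePotential, chipCount, totalChips, ha, Color.other]
    omega

theorem RedGuardedToMove.SRound_blueUnguarded {t : GState} (ht : RedGuardedToMove t) :
    BlueUnguardedToMove (SRound t) ∧ bluePotential (SRound t) ≤ bluePotential t := by
  obtain ⟨ha, hg, hb⟩ := ht
  have hblue (x : Color) : (SRound t).chips Color.b x = t.chips Color.b x :=
    SRound_chips_of_ne (by rw [ha]; decide) x
  refine ⟨⟨by rw [SRound_active, ha]; rfl, by rw [hblue, hb]⟩, ?_⟩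
  have := chipCount_SRound_le (t := t) (by rwa [ha])
  simp only [bluePotential, totalChips, hblue]
  omega

theorem BlueUnguardedToMove.winsWithS_r {s : GState} (hs : BlueUnguardedToMove s) :
    WinsWithS Color.r s := by
  induction hn : bluePotential s using Nat.strong_induction_on generalizing s with
  | _ n ih =>
  have hne : s.active ≠ Color.r := by rw [hs.1]; decide
  by_cases h0 : totalChips s s.active = 0
  · exact .elim s hne h0
  refine .theirs s hne (Nat.pos_of_ne_zero h0) fun s' hstep => ?_
  obtain ⟨hlt, hs' | hr⟩ := hstep.blueUnguarded hs
  · exact ih _ (hn ▸ hlt) hs' rfl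
  · obtain ⟨hS, hle⟩ := hr.SRound_blueUnguarded
    exact .mine s' hr.1 hr.2.1 (ih _ (by omega) hS rfl)

theorem genTypeI_red_wins_no_guards_general (s : GState)
    (hactive : s.active = Color.b)
    (hmb : s.chips Color.b Color.b = 0) :
    WinsWithS Color.r s :=
  BlueUnguardedToMove.winsWithS_r ⟨hactive, hmb⟩

/-- **Generalized type I, Red wins when Blue has no guards.**  Let the board
be of generalized type I (all piles alternating, no long `b`-piles, any
number of long `r`-piles) and let Blue be the active player.  If `m_b = 0`
when Blue's turn starts, then Red wins by applying strategy `S` at every one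
of Red's rounds. -/
theorem genTypeI_red_wins_no_guards (s : GState)
    (halt : Alternating s.board)
    (hroom : chipCount s ≤ s.board.length)
    (hactive : s.active = Color.b)
    (hI : longPiles Color.b s.board = [])
    (hmb : s.chips Color.b Color.b = 0) :
    WinsWithS Color.r s :=
  genTypeI_red_wins_no_guards_general s hactive hmb
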